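/- arXiv:1401.2776 — 2 statements merged into one kernel-verified Lean document; each statement's English description precedes it below -/
import Mathlib

section
/- (Borel–Nevanlinna growth lemma) Let u : [r₀, ∞) → ℝ be continuous nondecreasing with u(r) → ∞, and φ : [u₀, ∞) → (0, ∞) continuous nonincreasing with u₀ = u(r₀), φ(u) → 0 as u → ∞, and ∫_{u₀}^∞ φ(u) du < ∞. Then there exists a set E ⊆ [r₀, ∞) of finite Lebesgue measure such that for all r ∈ [r₀, ∞) \ E, u(r − φ(u(r))) > u(r) − 1. -/
open MeasureTheory Filter

theorem borel_nevanlinna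
    (r₀ u₀ : ℝ) (u φ : ℝ → ℝ)
    (hu_cont : ContinuousOn u (Set.Ici r₀))
    (hu_mono : MonotoneOn u (Set.Ici r₀))
    (hu_tendsto : Tendsto u atTop atTop)
    (hu₀ : u₀ = u r₀)
    (hφ_cont : ContinuousOn φ (Set.Ici u₀))
    (hφ_mono : AntitoneOn φ (Set.Ici u₀))
    (hφ_pos : ∀ x ∈ Set.Ici u₀, 0 < φ x)
    (hφ_tendsto : Tendsto φ atTop (nhds 0))
    (hφ_int : IntegrableOn φ (Set.Ici u₀) volume) :
    ∃ E : Set ℝ, E ⊆ Set.Ici r₀ ∧ volume E < ⊤ ∧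
      ∀ r ∈ Set.Ici r₀ \ E, u (r - φ (u r)) > u r - 1 := by
  classical
  set S : ℕ → Set ℝ := fun n => {x | r₀ ≤ x ∧ u₀ + (n : ℝ) ≤ u x} with hS
  have hSbdd : ∀ n, BddBelow (S n) := fun n => ⟨r₀, fun x hx => hx.1⟩
  have hSne : ∀ n, (S n).Nonempty := by
    intro n
    obtain ⟨x, hx1, hx2⟩ := ((hu_tendsto.eventually_ge_atTop (u₀ + n)).and
      (eventually_ge_atTop r₀)).exists
    exact ⟨x, hx2, hx1⟩
  have hSclosed : ∀ n, IsClosed (S n) := by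
    intro n
    have : S n = Set.Ici r₀ ∩ u ⁻¹' Set.Ici (u₀ + n) := by
      ext x; simp [hS, Set.mem_Ici]
    rw [this]
    exact hu_cont.preimage_isClosed_of_isClosed isClosed_Ici isClosed_Ici
  set a : ℕ → ℝ := fun n => sInf (S n) with ha
  have haS : ∀ n, a n ∈ S n := fun n => (hSclosed n).csInf_mem (hSne n) (hSbdd n)
  set E : Set ℝ := ⋃ n : ℕ, Set.Icc (a n) (a n + φ (u₀ + n)) with hE
  have hsub : E ⊆ Set.Ici r₀ := by
    intro x hx
    rw [hE, Set.mem_iUnion] at hx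
    obtain ⟨n, hn⟩ := hx
    exact le_trans (haS n).1 hn.1
  refine ⟨E, hsub, ?_, ?_⟩
  · -- measure estimate
    have hmem : ∀ n : ℕ, u₀ + (n : ℝ) ∈ Set.Ici u₀ := fun n =>
      Set.mem_Ici.2 (le_add_of_nonneg_right (Nat.cast_nonneg n))
    have hvol : volume E ≤ ∑' n : ℕ, ENNReal.ofReal (φ (u₀ + n)) := by
      refine le_trans (measure_iUnion_le _) (le_of_eq ?_)
      congr 1; funext n
      rw [Real.volume_Icc, add_sub_cancel_left]
    have htail : ∑' n : ℕ, ENNReal.ofReal (φ (u₀ + (n + 1 : ℕ)))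
        ≤ ∫⁻ x in Set.Ici u₀, ENNReal.ofReal (φ x) := by
      have hterm : ∀ n : ℕ, ENNReal.ofReal (φ (u₀ + (n + 1 : ℕ)))
          ≤ ∫⁻ x in Set.Ioc (u₀ + n) (u₀ + n + 1), ENNReal.ofReal (φ x) := by
        intro n
        have h1 : ENNReal.ofReal (φ (u₀ + (n + 1 : ℕ)))
            = ∫⁻ _ in Set.Ioc (u₀ + (n : ℝ)) (u₀ + n + 1),
                ENNReal.ofReal (φ (u₀ + (n + 1 : ℕ))) := by
          rw [setLIntegral_const, Real.volume_Ioc]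
          norm_num
        rw [h1]
        refine setLIntegral_mono' measurableSet_Ioc ?_
        intro x hx
        refine ENNReal.ofReal_le_ofReal
          (hφ_mono (le_trans (hmem n) hx.1.le) (hmem (n + 1)) ?_)
        push_cast
        linarith [hx.2]
      refine le_trans (ENNReal.tsum_le_tsum hterm) ?_
      have hdisj : Pairwise (Function.onFun Disjoint
          fun n : ℕ => Set.Ioc (u₀ + (n : ℝ)) (u₀ + n + 1)) := by
        intro i j hij
        rw [Function.onFun, Set.Ioc_disjoint_Ioc]
        rcases hij.lt_or_gt with h | h
        · have : (i : ℝ) + 1 ≤ j := by exact_mod_cast h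
          exact min_le_of_left_le (le_max_of_le_right (by linarith))
        · have : (j : ℝ) + 1 ≤ i := by exact_mod_cast h
          exact min_le_of_right_le (le_max_of_le_left (by linarith))
      have him : (⋃ n : ℕ, Set.Ioc (u₀ + (n : ℝ)) (u₀ + n + 1)) ⊆ Set.Ici u₀ := by
        intro x hx
        rw [Set.mem_iUnion] at hx
        obtain ⟨n, hn⟩ := hx
        exact le_trans (hmem n) hn.1.le
      calc ∑' n : ℕ, ∫⁻ x in Set.Ioc (u₀ + (n : ℝ)) (u₀ + n + 1), ENNReal.ofReal (φ x)
          = ∫⁻ x in ⋃ n : ℕ, Set.Ioc (u₀ + (n : ℝ)) (u₀ + n + 1), ENNReal.ofReal (φ x) :=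
            (lintegral_iUnion (fun _ => measurableSet_Ioc) hdisj _).symm
        _ ≤ ∫⁻ x in Set.Ici u₀, ENNReal.ofReal (φ x) := lintegral_mono_set him
    have hfin : ∫⁻ x in Set.Ici u₀, ENNReal.ofReal (φ x) < ⊤ :=
      hφ_int.setLIntegral_lt_top
    have hsplit : ∑' n : ℕ, ENNReal.ofReal (φ (u₀ + n))
        = ENNReal.ofReal (φ (u₀ + (0 : ℕ))) +
          ∑' n : ℕ, ENNReal.ofReal (φ (u₀ + (n + 1 : ℕ))) :=
      tsum_eq_zero_add' ENNReal.summable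
    calc volume E ≤ ∑' n : ℕ, ENNReal.ofReal (φ (u₀ + n)) := hvol
      _ = ENNReal.ofReal (φ (u₀ + (0 : ℕ))) +
          ∑' n : ℕ, ENNReal.ofReal (φ (u₀ + (n + 1 : ℕ))) := hsplit
      _ ≤ ENNReal.ofReal (φ (u₀ + (0 : ℕ))) +
          ∫⁻ x in Set.Ici u₀, ENNReal.ofReal (φ x) := by gcongr
      _ < ⊤ := by
          exact ENNReal.add_lt_top.2 ⟨ENNReal.ofReal_lt_top, hfin⟩
  · -- the inequality off E
    rintro r ⟨hr, hrE⟩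
    by_contra hcon
    push_neg at hcon
    have hur : u₀ ≤ u r := by rw [hu₀]; exact hu_mono Set.self_mem_Ici hr hr
    set n : ℕ := ⌊u r - u₀⌋₊ with hn
    have hn1 : u₀ + (n : ℝ) ≤ u r := by
      have := Nat.floor_le (sub_nonneg.2 hur)
      linarith
    have hn2 : u r < u₀ + n + 1 := by
      have := Nat.lt_floor_add_one (u r - u₀)
      linarith
    have hrS : r ∈ S n := ⟨hr, hn1⟩
    have har : a n ≤ r := csInf_le (hSbdd n) hrS
    have hnotin : r ∉ Set.Icc (a n) (a n + φ (u₀ + n)) := by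
      intro h
      exact hrE (Set.mem_iUnion.2 ⟨n, h⟩)
    have hgt : a n + φ (u₀ + n) < r := by
      by_contra h
      push_neg at h
      exact hnotin ⟨har, h⟩
    have hmemn : u₀ + (n : ℝ) ∈ Set.Ici u₀ := Set.mem_Ici.2 (le_add_of_nonneg_right (Nat.cast_nonneg n))
    have hφle : φ (u r) ≤ φ (u₀ + n) := hφ_mono hmemn hur hn1
    have hle : a n ≤ r - φ (u r) := by linarith
    have hr₀ : r₀ ≤ a n := (haS n).1
    have h1 : u (a n) ≤ u (r - φ (u r)) :=
      hu_mono hr₀ (le_trans hr₀ hle) hle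
    have h2 : u₀ + (n : ℝ) ≤ u (a n) := (haS n).2
    linarith [hcon, h1, h2, hn2]
end

section
/- For the entire function f(z) = 1 + ∑_{n=1}^∞ zⁿ/(n/2)^{n/2}, the maximum modulus satisfies M_f(r) ≥ exp(r²/e) for all r > 0, hence ln M_f(r) ≥ r²/e. -/
open Real

/-- `k^k ≤ e^k * k!` -/
lemma pow_self_le_exp_mul_factorial (k : ℕ) :
    ((k : ℝ)) ^ k ≤ Real.exp 1 ^ k * k.factorial := by
  have h1 : ((k : ℝ)) ^ k / k.factorial ≤ Real.exp k := by
    rw [Real.exp_eq_exp_ℝ, NormedSpace.exp_eq_tsum_div]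
    exact Summable.le_tsum (Real.summable_pow_div_factorial k) k (fun n _ => by positivity)
  have h2 : Real.exp (k : ℝ) = Real.exp 1 ^ k := by
    rw [← Real.exp_nat_mul, mul_one]
  have hfac : (0:ℝ) < k.factorial := by positivity
  rw [div_le_iff₀ hfac] at h1
  rw [h2] at h1
  exact h1

theorem max_modulus_lower_bound
    (f : ℂ → ℂ)
    (hf : ∀ z : ℂ, f z = 1 + ∑' n : ℕ,
      z ^ (n + 1) / ((((n + 1 : ℕ) : ℝ) / 2) ^ (((n + 1 : ℕ) : ℝ) / 2) : ℝ)) :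
    ∀ r : ℝ, 0 < r →
      Real.exp (r ^ 2 / Real.exp 1) ≤
        sSup ((fun z => ‖f z‖) '' Metric.closedBall (0 : ℂ) r) := by
  intro r hr
  set c : ℕ → ℝ := fun n => (((n + 1 : ℕ) : ℝ) / 2) ^ (((n + 1 : ℕ) : ℝ) / 2) with hc
  have hcpos : ∀ n, 0 < c n := fun n => by
    apply Real.rpow_pos_of_pos
    positivity
  set a : ℕ → ℝ := fun n => r ^ (n + 1) / c n with ha
  have hapos : ∀ n, 0 < a n := fun n => by
    apply div_pos (by positivity) (hcpos n)
  -- summability of `a`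
  obtain ⟨N, hN⟩ := exists_nat_ge ((2 * r) ^ 2 * 2)
  have hbound : ∀ n, N ≤ n → a n ≤ (1/2 : ℝ) ^ (n + 1) := by
    intro n hn
    have hbase : (2 * r) ^ 2 ≤ ((n + 1 : ℕ) : ℝ) / 2 := by
      have : ((N:ℝ)) ≤ ((n:ℝ)) := by exact_mod_cast hn
      push_cast
      nlinarith
    have hc_ge : (2 * r) ^ (n + 1) ≤ c n := by
      have h2r : (0:ℝ) < 2 * r := by linarith
      have : ((2 * r) ^ 2) ^ ((((n + 1 : ℕ) : ℝ)) / 2) ≤ c n := by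
        apply Real.rpow_le_rpow (by positivity) hbase (by positivity)
      calc (2 * r) ^ (n + 1) = (2 * r) ^ (((n + 1 : ℕ) : ℝ)) := by
            rw [Real.rpow_natCast]
        _ = ((2 * r) ^ (2:ℝ)) ^ ((((n + 1 : ℕ) : ℝ)) / 2) := by
            rw [← Real.rpow_mul h2r.le]
            congr 1 <;> ring
        _ = ((2 * r) ^ 2) ^ ((((n + 1 : ℕ) : ℝ)) / 2) := by
            rw [Real.rpow_two]
        _ ≤ c n := this
    have : a n ≤ r ^ (n + 1) / (2 * r) ^ (n + 1) := by
      apply div_le_div_of_nonneg_left (by positivity) (by positivity) hc_ge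
    calc a n ≤ r ^ (n + 1) / (2 * r) ^ (n + 1) := this
      _ = (1/2 : ℝ) ^ (n + 1) := by
          rw [← div_pow]
          congr 1
          rw [div_eq_div_iff (by positivity) (by norm_num)]
          ring
  have hsum_a : Summable a := by
    rw [← summable_nat_add_iff N]
    apply Summable.of_nonneg_of_le (fun n => (hapos _).le)
      (fun n => hbound (n + N) (by omega))
    exact Summable.comp_injective (f := fun k : ℕ => (1/2 : ℝ) ^ k)
      (summable_geometric_of_lt_one (by norm_num) (by norm_num))
      (fun u v h => by omega)
  -- norm summability for the complex series, for any z with |z| ≤ r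
  have hsumz : ∀ z : ℂ, ‖z‖ ≤ r →
      Summable (fun n : ℕ => ‖z ^ (n + 1) / ((c n : ℝ) : ℂ)‖) := by
    intro z hz
    apply Summable.of_nonneg_of_le (fun n => norm_nonneg _) _ hsum_a
    intro n
    show ‖z ^ (n + 1) / ((c n : ℝ) : ℂ)‖ ≤ r ^ (n + 1) / c n
    rw [norm_div, norm_pow]
    simp only [Complex.norm_real, Real.norm_eq_abs, abs_of_pos (hcpos n)]
    gcongr
  -- upper bound on the image set
  have hbdd : BddAbove ((fun z => ‖f z‖) '' Metric.closedBall (0 : ℂ) r) := by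
    refine ⟨1 + ∑' n, a n, ?_⟩
    rintro x ⟨z, hz, rfl⟩
    rw [Metric.mem_closedBall, dist_zero_right] at hz
    simp only [hf z]
    calc ‖1 + ∑' n, z ^ (n + 1) / ((c n : ℝ) : ℂ)‖
        ≤ ‖(1:ℂ)‖ + ‖∑' n, z ^ (n + 1) / ((c n : ℝ) : ℂ)‖ := by
          apply norm_add_le
      _ ≤ 1 + ∑' n, a n := by
          rw [norm_one]
          have h1 : ‖∑' n, z ^ (n + 1) / ((c n : ℝ) : ℂ)‖
              ≤ ∑' n, ‖z ^ (n + 1) / ((c n : ℝ) : ℂ)‖ :=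
            norm_tsum_le_tsum_norm (hsumz z hz)
          have h2 : (∑' n, ‖z ^ (n + 1) / ((c n : ℝ) : ℂ)‖) ≤ ∑' n, a n := by
            apply Summable.tsum_le_tsum _ (hsumz z hz) hsum_a
            intro n
            show ‖z ^ (n + 1) / ((c n : ℝ) : ℂ)‖ ≤ r ^ (n + 1) / c n
            rw [norm_div, norm_pow]
            simp only [Complex.norm_real, Real.norm_eq_abs, abs_of_pos (hcpos n)]
            gcongr
          linarith
  -- value at z = r
  have hmem : (1 + ∑' n, a n) ∈
      ((fun z => ‖f z‖) '' Metric.closedBall (0 : ℂ) r) := by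
    refine ⟨(r : ℂ), ?_, ?_⟩
    · rw [Metric.mem_closedBall, dist_zero_right]
      simp [abs_of_pos hr]
    · show ‖f (r : ℂ)‖ = 1 + ∑' n, a n
      rw [hf]
      have : (∑' n : ℕ, (r:ℂ) ^ (n + 1) / ((c n : ℝ) : ℂ)) = ((∑' n, a n : ℝ) : ℂ) := by
        rw [Complex.ofReal_tsum]
        congr 1
        funext n
        simp [ha]
      rw [this]
      rw [show (1 : ℂ) + ((∑' n, a n : ℝ) : ℂ) = (((1 + ∑' n, a n : ℝ)) : ℂ) by push_cast; ring]
      rw [Complex.norm_real, Real.norm_eq_abs, abs_of_pos]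
      have : 0 ≤ ∑' n, a n := tsum_nonneg (fun n => (hapos n).le)
      linarith
  -- the exponential lower bound
  have hkey : Real.exp (r ^ 2 / Real.exp 1) ≤ 1 + ∑' n, a n := by
    set x : ℝ := r ^ 2 / Real.exp 1 with hx
    have hx0 : 0 ≤ x := by positivity
    have hexp : Real.exp x = ∑' n : ℕ, x ^ n / n.factorial := by
      rw [Real.exp_eq_exp_ℝ, NormedSpace.exp_eq_tsum_div]
    rw [hexp, Summable.tsum_eq_zero_add (Real.summable_pow_div_factorial x)]
    simp only [pow_zero, Nat.factorial_zero, Nat.cast_one, div_one]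
    gcongr 1 + ?_
    -- ∑' m, x^(m+1)/(m+1)! ≤ ∑' m, a (2m+1) ≤ ∑' n, a n
    have hstep1 : ∀ m : ℕ, x ^ (m + 1) / (m + 1).factorial ≤ a (2 * m + 1) := by
      intro m
      have hc_eq : c (2 * m + 1) = ((m + 1 : ℕ) : ℝ) ^ (m + 1 : ℕ) := by
        have h1 : (((2 * m + 1 + 1 : ℕ) : ℝ)) / 2 = ((m + 1 : ℕ) : ℝ) := by
          push_cast; ring
        rw [hc]
        simp only [h1]
        rw [Real.rpow_natCast]
      have ha_eq : a (2 * m + 1) = r ^ (2 * (m + 1)) / ((m + 1 : ℕ) : ℝ) ^ (m + 1 : ℕ) := by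
        rw [ha]
        simp only [hc_eq]
        ring_nf
      rw [ha_eq]
      have hxpow : x ^ (m + 1) = r ^ (2 * (m + 1)) / Real.exp 1 ^ (m + 1) := by
        rw [hx, div_pow, ← pow_mul]
      rw [hxpow, div_div]
      apply div_le_div_of_nonneg_left (by positivity) (by positivity)
      exact_mod_cast pow_self_le_exp_mul_factorial (m + 1)
    calc (∑' m : ℕ, x ^ (m + 1) / (m + 1).factorial)
        ≤ ∑' m : ℕ, a (2 * m + 1) := by
          apply Summable.tsum_le_tsum hstep1 _ _
          · exact (summable_nat_add_iff 1).mpr (Real.summable_pow_div_factorial x)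
          · apply hsum_a.comp_injective
            intro u v h; dsimp only at h; omega
      _ ≤ ∑' n, a n := by
          apply tsum_comp_le_tsum_of_inj hsum_a (fun n => (hapos n).le)
            (i := fun m => 2 * m + 1)
          intro u v h; dsimp only at h; omega
  calc Real.exp (r ^ 2 / Real.exp 1) ≤ 1 + ∑' n, a n := hkey
    _ ≤ sSup _ := le_csSup hbdd hmem
end
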